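/- arXiv:2404.18808 — 2 statements merged into one kernel-verified Lean document; each statement's English description precedes it below -/
import Mathlib

section
/- Let F be a field of characteristic different from 3 containing a primitive cube root of unity ζ₃. Define P_i(s) = ((s+ζ₃)^{3i} - (s+ζ₃²)^{3i})/(3(ζ₃-ζ₃²)s(s-1)) and Q_i(s) = (((1-ζ₃)/3)(s+ζ₃)^{3i-1} + ((1-ζ₃²)/3)(s+ζ₃²)^{3i-1})/(s-1). Then for all integers i, j, ℓ: P_i(s)·Q_{ℓ+j}(s) − P_j(s)·Q_{ℓ+i}(s) = (s²−s+1)^{3j}·P_{i−j}(s)·Q_ℓ(s) in F(s). -/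
/-!
With `a = s + ζ₃` and `b = s + ζ₃²` one has `a * b = s² - s + 1`, and up to constant factors
`P_i` and `Q_i` are the Binet forms `a^(3i) - b^(3i)` and `α a^(3i-1) + β b^(3i-1)`. The claim is
then an instance of a d'Ocagne-type identity for such forms, which holds for any nonzero `a`, `b`
in a field after expanding all powers.
-/

theorem dOcagne_zpow {K : Type*} [Field K] {a b : K} (ha : a ≠ 0) (hb : b ≠ 0) (α β : K)
    (m n k : ℤ) :
    (a ^ m - b ^ m) * (α * a ^ (k + n) + β * b ^ (k + n)) -
        (a ^ n - b ^ n) * (α * a ^ (k + m) + β * b ^ (k + m)) =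
      (a * b) ^ n * (a ^ (m - n) - b ^ (m - n)) * (α * a ^ k + β * b ^ k) := by
  simp only [zpow_add₀ ha, zpow_add₀ hb, zpow_sub₀ ha, zpow_sub₀ hb, mul_zpow]
  field_simp
  ring

theorem sq_sub_self_add_one_eq_mul {R : Type*} [CommRing R] {ω : R} (hω : ω ^ 2 + ω + 1 = 0)
    (x : R) : x ^ 2 - x + 1 = (x + ω) * (x + ω ^ 2) := by
  linear_combination (-x - ω + 1) * hω

theorem RatFunc.X_add_C_ne_zero {F : Type*} [Field F] (c : F) :
    (RatFunc.X + RatFunc.C c : RatFunc F) ≠ 0 := by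
  rw [← RatFunc.algebraMap_X, ← RatFunc.algebraMap_C, ← map_add]
  exact RatFunc.algebraMap_ne_zero (Polynomial.X_add_C_ne_zero c)

theorem stmt6_general (F : Type*) [Field F]
    (ζ : F) (hζ : IsPrimitiveRoot ζ 3)
    (P Q : ℤ → RatFunc F)
    (hP : ∀ i : ℤ, P i =
      ((RatFunc.X + RatFunc.C ζ) ^ (3 * i) - (RatFunc.X + RatFunc.C (ζ ^ 2)) ^ (3 * i)) /
        (3 * (RatFunc.C ζ - RatFunc.C (ζ ^ 2)) * RatFunc.X * (RatFunc.X - 1)))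
    (hQ : ∀ i : ℤ, Q i =
      (RatFunc.C ((1 - ζ) / 3) * (RatFunc.X + RatFunc.C ζ) ^ (3 * i - 1) +
        RatFunc.C ((1 - ζ ^ 2) / 3) * (RatFunc.X + RatFunc.C (ζ ^ 2)) ^ (3 * i - 1)) /
        (RatFunc.X - 1))
    (i j ℓ : ℤ) :
    P i * Q (ℓ + j) - P j * Q (ℓ + i) =
      (RatFunc.X ^ 2 - RatFunc.X + 1) ^ (3 * j) * P (i - j) * Q ℓ := by
  have hω : RatFunc.C ζ ^ 2 + RatFunc.C ζ + 1 = (0 : RatFunc F) := by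
    have := (hζ.map_of_injective (RatFunc.C_injective (K := F))).geom_sum_eq_zero (by norm_num)
    simp only [Finset.sum_range_succ, Finset.sum_range_zero, pow_zero, pow_one] at this
    linear_combination this
  have hdOcagne := dOcagne_zpow (RatFunc.X_add_C_ne_zero ζ) (RatFunc.X_add_C_ne_zero (ζ ^ 2))
    (RatFunc.C ((1 - ζ) / 3)) (RatFunc.C ((1 - ζ ^ 2) / 3)) (3 * i) (3 * j) (3 * ℓ - 1)
  rw [show 3 * ℓ - 1 + 3 * j = 3 * (ℓ + j) - 1 by ring,
    show 3 * ℓ - 1 + 3 * i = 3 * (ℓ + i) - 1 by ring, show 3 * i - 3 * j = 3 * (i - j) by ring,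
    map_pow, ← sq_sub_self_add_one_eq_mul hω, ← map_pow] at hdOcagne
  rw [hP, hP, hP, hQ, hQ, hQ]
  -- opaque denominators, so that `ring` does not expand them under `⁻¹`
  generalize 3 * (RatFunc.C ζ - RatFunc.C (ζ ^ 2)) * RatFunc.X * (RatFunc.X - 1) = D
  generalize (RatFunc.X - 1 : RatFunc F) = E
  linear_combination hdOcagne / (D * E)

theorem stmt6 (F : Type*) [Field F] (h3 : ringChar F ≠ 3)
    (ζ : F) (hζ : IsPrimitiveRoot ζ 3)
    (P Q : ℤ → RatFunc F)
    (hP : ∀ i : ℤ, P i =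
      ((RatFunc.X + RatFunc.C ζ) ^ (3 * i) - (RatFunc.X + RatFunc.C (ζ ^ 2)) ^ (3 * i)) /
        (3 * (RatFunc.C ζ - RatFunc.C (ζ ^ 2)) * RatFunc.X * (RatFunc.X - 1)))
    (hQ : ∀ i : ℤ, Q i =
      (RatFunc.C ((1 - ζ) / 3) * (RatFunc.X + RatFunc.C ζ) ^ (3 * i - 1) +
        RatFunc.C ((1 - ζ ^ 2) / 3) * (RatFunc.X + RatFunc.C (ζ ^ 2)) ^ (3 * i - 1)) /
        (RatFunc.X - 1))
    (i j ℓ : ℤ) :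
    P i * Q (ℓ + j) - P j * Q (ℓ + i) =
      (RatFunc.X ^ 2 - RatFunc.X + 1) ^ (3 * j) * P (i - j) * Q ℓ :=
  stmt6_general F ζ hζ P Q hP hQ i j ℓ
end

section
/- Let F be a field of characteristic ≠ 3 containing a primitive cube root of unity ζ₃, and let i be a positive integer. Then the polynomials P_i(s) = ((s+ζ₃)^{3i} - (s+ζ₃²)^{3i})/(3(ζ₃-ζ₃²)s(s-1)) and Q_i(s) = (((1-ζ₃)/3)(s+ζ₃)^{3i-1} + ((1-ζ₃²)/3)(s+ζ₃²)^{3i-1})/(s-1) have no common roots in any algebraically closed extension of F. -/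
/-!
Let `x` be a common root and `ω` the image of `ζ`. Then `(x + ω)^{3i} = (x + ω²)^{3i}` and
`(1 - ω)(x + ω)^{3i-1} + (1 - ω²)(x + ω²)^{3i-1} = 0`. Since `x + ω² ≠ 0`, eliminating the powers
leaves `(1 - ω)(x + ω²) + (1 - ω²)(x + ω) = 3(x - 1) = 0`, so `x = 1`. Differentiating the identities
`P_i · 3(ζ - ζ²) s (s - 1) = …` and `Q_i · (s - 1) = …` at `s = 1`, where `1 + ζ = -ζ²` is a sixth
root of unity, gives `P_i(1) = (-1)^{i-1} i` and `Q_i(1) = (-1)^{i-1} (3i - 1)`; these cannot both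
vanish because `3 · i - (3i - 1) = 1`.
-/

open Polynomial

theorem Polynomial.eval_derivative_mul_X_sub_C {R : Type*} [CommRing R] (p : R[X]) (a : R) :
    (derivative (p * (X - C a))).eval a = p.eval a := by
  simp

theorem RatFunc.mul_eq_of_algebraMap_eq_div {K : Type*} [Field K] {p f g : K[X]} (hg : g ≠ 0)
    (h : algebraMap K[X] (RatFunc K) p =
      algebraMap K[X] (RatFunc K) f / algebraMap K[X] (RatFunc K) g) : p * g = f := by
  apply RatFunc.algebraMap_injective K
  rw [map_mul, h, div_mul_cancel₀ _ ((map_ne_zero_iff _ (RatFunc.algebraMap_injective K)).mpr hg)]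

namespace IsPrimitiveRoot

variable {K : Type*} [Field K] {ω : K} (hω : IsPrimitiveRoot ω 3)
include hω

theorem three_ne_zero : (3 : K) ≠ 0 := by
  exact_mod_cast hω.neZero'.out

theorem one_add_add_sq : 1 + ω + ω ^ 2 = 0 := by
  simpa [Finset.sum_range_succ] using hω.geom_sum_eq_zero (by norm_num)

theorem sub_sq_ne_zero : ω - ω ^ 2 ≠ 0 :=
  sub_ne_zero.mpr fun h => by
    simpa using hω.pow_inj (i := 1) (j := 2) (by norm_num) (by norm_num) (by simpa using h)

theorem one_add_pow_three_mul_add (j r : ℕ) :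
    (1 + ω) ^ (3 * j + r) = (-1) ^ j * (1 + ω) ^ r := by
  have h : (1 + ω) ^ 3 = -1 := by
    linear_combination 3 * hω.one_add_add_sq + hω.pow_eq_one
  rw [pow_add, pow_mul, h]

theorem eq_one_of_common_root {x : K} (n : ℕ)
    (hP : (x + ω) ^ (n + 1) - (x + ω ^ 2) ^ (n + 1) = 0)
    (hQ : (1 - ω) / 3 * (x + ω) ^ n + (1 - ω ^ 2) / 3 * (x + ω ^ 2) ^ n = 0) : x = 1 := by
  have hQ' : (1 - ω) * (x + ω) ^ n + (1 - ω ^ 2) * (x + ω ^ 2) ^ n = 0 := by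
    field_simp [hω.three_ne_zero] at hQ
    linear_combination hQ
  have hx : x + ω ^ 2 ≠ 0 := fun hx => hω.sub_sq_ne_zero <| by
    have hx' : x + ω = 0 := by
      rw [hx, zero_pow n.succ_ne_zero, sub_zero] at hP
      exact (pow_eq_zero_iff n.succ_ne_zero).mp hP
    linear_combination hx' - hx
  have hlin : ((1 - ω) * (x + ω ^ 2) + (1 - ω ^ 2) * (x + ω)) * (x + ω ^ 2) ^ n = 0 := by
    linear_combination (x + ω) * hQ' - (1 - ω) * hP
  have h3 : 3 * (x - 1) = 0 := by
    linear_combination (mul_eq_zero.mp hlin).resolve_right (pow_ne_zero _ hx) +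
      (x - 1) * hω.one_add_add_sq + 2 * hω.pow_eq_one
  exact sub_eq_zero.mp ((mul_eq_zero.mp h3).resolve_left hω.three_ne_zero)

theorem eval_one_of_mul_eq_pow_sub_pow (j : ℕ) {p : K[X]}
    (h : p * (C (3 * (ω - ω ^ 2)) * X * (X - C 1)) =
      (X + C ω) ^ (3 * j + 3) - (X + C (ω ^ 2)) ^ (3 * j + 3)) :
    p.eval 1 = (-1) ^ j * (j + 1) := by
  have hω2 := hω.pow_of_coprime 2 (by norm_num)
  have key := congrArg (fun q => (derivative q).eval 1) h
  simp only [← mul_assoc p] at key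
  rw [eval_derivative_mul_X_sub_C, derivative_sub, derivative_X_add_C_pow,
    derivative_X_add_C_pow] at key
  simp [hω.one_add_pow_three_mul_add, hω2.one_add_pow_three_mul_add] at key
  apply mul_right_cancel₀ (mul_ne_zero hω.three_ne_zero hω.sub_sq_ne_zero)
  linear_combination key - 3 * (j + 1) * (-1) ^ j * ω * hω.pow_eq_one

theorem eval_one_of_mul_X_sub_one_eq_add (j : ℕ) {Q : K[X]}
    (h : Q * (X - C 1) = C ((1 - ω) / 3) * (X + C ω) ^ (3 * j + 2) +
      C ((1 - ω ^ 2) / 3) * (X + C (ω ^ 2)) ^ (3 * j + 2)) :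
    Q.eval 1 = (-1) ^ j * (3 * j + 2) := by
  have hω2 := hω.pow_of_coprime 2 (by norm_num)
  have key := congrArg (fun q => (derivative q).eval 1) h
  simp only [eval_derivative_mul_X_sub_C, derivative_add, derivative_C_mul,
    derivative_X_add_C_pow] at key
  simp [hω.one_add_pow_three_mul_add, hω2.one_add_pow_three_mul_add] at key
  rw [key]
  field_simp [hω.three_ne_zero]
  linear_combination -(3 * j + 2) * (hω.one_add_add_sq + ω * hω.pow_eq_one)

end IsPrimitiveRoot

theorem stmt9_general (F : Type*) [Field F]
    (ζ : F) (hζ : IsPrimitiveRoot ζ 3) (i : ℕ) (hi : 1 ≤ i)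
    (p Q : Polynomial F)
    (hp : algebraMap (Polynomial F) (RatFunc F) p =
      ((RatFunc.X + RatFunc.C ζ) ^ (3 * i) - (RatFunc.X + RatFunc.C (ζ ^ 2)) ^ (3 * i)) /
        (3 * (RatFunc.C ζ - RatFunc.C (ζ ^ 2)) * RatFunc.X * (RatFunc.X - 1)))
    (hQ : algebraMap (Polynomial F) (RatFunc F) Q =
      (RatFunc.C ((1 - ζ) / 3) * (RatFunc.X + RatFunc.C ζ) ^ (3 * i - 1) +
        RatFunc.C ((1 - ζ ^ 2) / 3) * (RatFunc.X + RatFunc.C (ζ ^ 2)) ^ (3 * i - 1)) /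
        (RatFunc.X - 1))
    (E : Type*) [Field E] [Algebra F E] (x : E) :
    ¬ (Polynomial.aeval x p = 0 ∧ Polynomial.aeval x Q = 0) := by
  rintro ⟨hpx, hQx⟩
  obtain ⟨j, rfl⟩ := Nat.exists_eq_add_of_le' hi
  rw [show 3 * (j + 1) = 3 * j + 3 by ring] at hp
  rw [show 3 * (j + 1) - 1 = 3 * j + 2 by omega] at hQ
  have hp' := RatFunc.mul_eq_of_algebraMap_eq_div
    (f := (X + C ζ) ^ (3 * j + 3) - (X + C (ζ ^ 2)) ^ (3 * j + 3))
    (mul_ne_zero (mul_ne_zero (C_ne_zero.mpr (mul_ne_zero hζ.three_ne_zero hζ.sub_sq_ne_zero))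
      X_ne_zero) (X_sub_C_ne_zero 1)) (by rw [hp]; simp [map_ofNat])
  have hQ' := RatFunc.mul_eq_of_algebraMap_eq_div (X_sub_C_ne_zero 1)
    (f := C ((1 - ζ) / 3) * (X + C ζ) ^ (3 * j + 2) +
      C ((1 - ζ ^ 2) / 3) * (X + C (ζ ^ 2)) ^ (3 * j + 2)) (by rw [hQ]; simp)
  have hx : x = 1 :=
    (hζ.map_of_injective (algebraMap F E).injective).eq_one_of_common_root (3 * j + 2)
      (by simpa [hpx] using (congrArg (aeval x) hp').symm)
      (by simpa [hQx, map_ofNat] using (congrArg (aeval x) hQ').symm)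
  subst hx
  rw [← map_one (algebraMap F E), aeval_algebraMap_apply_eq_algebraMap_eval,
    map_eq_zero_iff _ (algebraMap F E).injective] at hpx hQx
  have hp1 : (-1 : F) ^ j * (j + 1) = 0 := (hζ.eval_one_of_mul_eq_pow_sub_pow j hp').symm.trans hpx
  have hQ1 : (-1 : F) ^ j * (3 * j + 2) = 0 :=
    (hζ.eval_one_of_mul_X_sub_one_eq_add j hQ').symm.trans hQx
  exact pow_ne_zero j (neg_ne_zero.mpr one_ne_zero : (-1 : F) ≠ 0)
    (by linear_combination 3 * hp1 - hQ1)

theorem stmt9 (F : Type*) [Field F] (h3 : ringChar F ≠ 3)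
    (ζ : F) (hζ : IsPrimitiveRoot ζ 3) (i : ℕ) (hi : 1 ≤ i)
    (p Q : Polynomial F)
    (hp : algebraMap (Polynomial F) (RatFunc F) p =
      ((RatFunc.X + RatFunc.C ζ) ^ (3 * i) - (RatFunc.X + RatFunc.C (ζ ^ 2)) ^ (3 * i)) /
        (3 * (RatFunc.C ζ - RatFunc.C (ζ ^ 2)) * RatFunc.X * (RatFunc.X - 1)))
    (hQ : algebraMap (Polynomial F) (RatFunc F) Q =
      (RatFunc.C ((1 - ζ) / 3) * (RatFunc.X + RatFunc.C ζ) ^ (3 * i - 1) +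
        RatFunc.C ((1 - ζ ^ 2) / 3) * (RatFunc.X + RatFunc.C (ζ ^ 2)) ^ (3 * i - 1)) /
        (RatFunc.X - 1))
    (E : Type*) [Field E] [IsAlgClosed E] [Algebra F E] (x : E) :
    ¬ (Polynomial.aeval x p = 0 ∧ Polynomial.aeval x Q = 0) :=
  stmt9_general F ζ hζ i hi p Q hp hQ E x
end
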